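/- arXiv:2109.06348 — 2 statements merged into one kernel-verified Lean document; each statement's English description precedes it below -/
import Mathlib

section
/- For a mean-zero (demeaned exponential) frailty ν with density θ e^{-θ(ν + 1/θ)} on ν ≥ -1/θ, the marginalized cumulative incidence E_ν[F₁(t; X, ν)] satisfies: its subdistribution hazard retains the additive structure in the covariate term, i.e., -d/dt log{1 - E_ν F₁(t; X, ν)} = λ̃₀(t) + Xᵀβ₁ e^{-t} for some function λ̃₀ not depending on X. -/
open MeasureTheory Real Matrix

/-!
The conditional survival `1 - F₁` is affine in the frailty `ν`, so averaging over a mean-zero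
`ν` simply replaces `ρ + ν` by `ρ`. The marginal survival then factors as
`{1 - ρ(1 - e^{-t})} · exp{-Xᵀβ₁ (1 - e^{-t})}`, and the negative log-derivative of such a
product is the sum of the negative log-derivatives of its factors: a term free of `X` plus
`Xᵀβ₁ e^{-t}`.
-/

section Marginalization

variable {Ω : Type*} [MeasurableSpace Ω] {μ : Measure Ω} [IsProbabilityMeasure μ] {ν : Ω → ℝ}

theorem integral_const_add_mul_of_integral_eq_zero (hν : Integrable ν μ)
    (hmean : ∫ ω, ν ω ∂μ = 0) (a b : ℝ) : ∫ ω, (a + b * ν ω) ∂μ = a := by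
  rw [integral_add (integrable_const a) (hν.const_mul b), integral_const_mul, hmean]
  simp

theorem integral_one_sub_one_sub_add_mul_mul_of_integral_eq_zero (hν : Integrable ν μ)
    (hmean : ∫ ω, ν ω ∂μ = 0) (ρ q E : ℝ) :
    ∫ ω, (1 - (1 - (ρ + ν ω) * q) * E) ∂μ = 1 - (1 - ρ * q) * E := by
  have haffine : ∀ ω, 1 - (1 - (ρ + ν ω) * q) * E = (1 - (1 - ρ * q) * E) + q * E * ν ω := by
    intro ω; ring
  simp_rw [haffine]
  exact integral_const_add_mul_of_integral_eq_zero hν hmean _ _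

end Marginalization

theorem one_sub_mul_one_sub_exp_neg_pos {ρ t : ℝ} (hρ : ρ < 1) (ht : 0 ≤ t) :
    0 < 1 - ρ * (1 - exp (-t)) := by
  have h0 : 0 ≤ 1 - exp (-t) := sub_nonneg.mpr (exp_le_one_iff.mpr (neg_nonpos.mpr ht))
  have h1 : 1 - exp (-t) < 1 := sub_lt_self 1 (exp_pos _)
  nlinarith [mul_nonneg (sub_nonneg.mpr hρ.le) h0]

theorem hasDerivAt_one_sub_exp_neg (t : ℝ) :
    HasDerivAt (fun s => 1 - exp (-s)) (exp (-t)) t := by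
  simpa using ((hasDerivAt_neg t).exp).const_sub 1

theorem hasDerivAt_neg_log_mul_exp {f g : ℝ → ℝ} {f' g' t : ℝ} (hf : HasDerivAt f f' t)
    (hft : f t ≠ 0) (hg : HasDerivAt g g' t) :
    HasDerivAt (fun s => -log (f s * exp (g s))) (-(f' / f t) - g') t := by
  refine ((hf.fun_mul hg.exp).log (mul_ne_zero hft (exp_pos _).ne')).neg.congr_deriv ?_
  field_simp
  ring

theorem marginalized_cif_additive_hazard_general
    (p : ℕ) (ρ : ℝ) (hρ1 : ρ < 1)
    (β₁ : Fin p → ℝ)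
    (Ω : Type*) [MeasurableSpace Ω] (μ : Measure Ω) [IsProbabilityMeasure μ]
    (ν : Ω → ℝ) (hνint : Integrable ν μ) (hνmean : ∫ ω, ν ω ∂μ = 0)
    (F₁ : ℝ → (Fin p → ℝ) → Ω → ℝ)
    (hF₁ : ∀ t X ω, F₁ t X ω =
      1 - (1 - (ρ + ν ω) * (1 - Real.exp (-t))) *
        Real.exp (-(X ⬝ᵥ β₁) * (1 - Real.exp (-t)))) :
    ∃ lam0 : ℝ → ℝ, ∀ (X : Fin p → ℝ) (t : ℝ), 0 ≤ t →
      HasDerivAt (fun s => -Real.log (1 - ∫ ω, F₁ s X ω ∂μ))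
        (lam0 t + (X ⬝ᵥ β₁) * Real.exp (-t)) t := by
  refine ⟨fun t => ρ * exp (-t) / (1 - ρ * (1 - exp (-t))), fun X t ht => ?_⟩
  have hsurv : ∀ s, 1 - ∫ ω, F₁ s X ω ∂μ =
      (1 - ρ * (1 - exp (-s))) * exp (-(X ⬝ᵥ β₁) * (1 - exp (-s))) := by
    intro s
    simp_rw [hF₁, integral_one_sub_one_sub_add_mul_mul_of_integral_eq_zero hνint hνmean]
    ring
  simp_rw [hsurv]
  have hq := hasDerivAt_one_sub_exp_neg t
  refine (hasDerivAt_neg_log_mul_exp ((hq.const_mul ρ).const_sub 1)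
    (one_sub_mul_one_sub_exp_neg_pos hρ1 ht).ne' (hq.const_mul (-(X ⬝ᵥ β₁)))).congr_deriv ?_
  ring

/-- Marginalizing the frailty-conditional CIF over a mean-zero frailty
preserves the additive structure of the subdistribution hazard: the hazard of the
marginalized CIF equals a baseline term `λ̃₀(t)` (not depending on `X`) plus
`Xᵀβ₁ e^{-t}`. -/
theorem marginalized_cif_additive_hazard
    (p : ℕ) (ρ : ℝ) (hρ : 0 < ρ) (hρ1 : ρ < 1)
    (β₁ : Fin p → ℝ)
    (Ω : Type*) [MeasurableSpace Ω] (μ : Measure Ω) [IsProbabilityMeasure μ]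
    (ν : Ω → ℝ) (hνint : Integrable ν μ) (hνmean : ∫ ω, ν ω ∂μ = 0)
    (hνrange : ∀ᵐ ω ∂μ, 0 < ρ + ν ω ∧ ρ + ν ω < 1)
    (F₁ : ℝ → (Fin p → ℝ) → Ω → ℝ)
    (hF₁ : ∀ t X ω, F₁ t X ω =
      1 - (1 - (ρ + ν ω) * (1 - Real.exp (-t))) *
        Real.exp (-(X ⬝ᵥ β₁) * (1 - Real.exp (-t)))) :
    ∃ lam0 : ℝ → ℝ, ∀ (X : Fin p → ℝ) (t : ℝ), 0 ≤ t →
      HasDerivAt (fun s => -Real.log (1 - ∫ ω, F₁ s X ω ∂μ))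
        (lam0 t + (X ⬝ᵥ β₁) * Real.exp (-t)) t :=
  marginalized_cif_additive_hazard_general p ρ hρ1 β₁ Ω μ ν hνint hνmean F₁ hF₁
end

section
/- The IPCW weight ω(t) = r(t) G(t)/G(Z ∧ t) with r(t) = 1{C ≥ T ∧ t}, Z = T ∧ C, satisfies E[ω(t) · h(T, ε) · 1{T ≤ t}] = G(t) · E[h(T, ε) 1{T ≤ t}] for any bounded measurable h, when C is independent of (T, ε) with survival function G(t) = P(C ≥ t) > 0. -/
open MeasureTheory ProbabilityTheory

/-!
On `{T ≤ t}` the weight is `1{T ≤ C} · G(t) / G(T)`. Since `C` is independent of `(T, ε)`,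
integrating out `C` first replaces `1{T ≤ C}` by `P(C ≥ T) = G(T)`, which cancels the
denominator; `G(T) > 0` because `0 < T ≤ t ≤ τ`.
-/

section
variable {Ω α β E : Type*} {mΩ : MeasurableSpace Ω} {mα : MeasurableSpace α}
  {mβ : MeasurableSpace β} {μ : Measure Ω} [IsFiniteMeasure μ]
  [NormedAddCommGroup E] [NormedSpace ℝ E]

theorem ProbabilityTheory.IndepFun.integral_comp_prodMk {X : Ω → α} {Y : Ω → β}
    (hXY : IndepFun X Y μ) (hX : Measurable X) (hY : Measurable Y) {F : α × β → E}
    (hF : StronglyMeasurable F) (hFi : Integrable (fun ω ↦ F (X ω, Y ω)) μ) :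
    ∫ ω, F (X ω, Y ω) ∂μ = ∫ ω, ∫ ω', F (X ω', Y ω) ∂μ ∂μ := by
  have hmap : μ.map (fun ω ↦ (X ω, Y ω)) = (μ.map X).prod (μ.map Y) :=
    (indepFun_iff_map_prod_eq_prod_map_map hX.aemeasurable hY.aemeasurable).mp hXY
  have hXYm : Measurable fun ω ↦ (X ω, Y ω) := hX.prodMk hY
  have hFi' : Integrable F ((μ.map X).prod (μ.map Y)) :=
    hmap ▸ (integrable_map_measure hF.aestronglyMeasurable hXYm.aemeasurable).mpr hFi
  rw [← integral_map hXYm.aemeasurable hF.aestronglyMeasurable, hmap, integral_prod_symm F hFi',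
    integral_map hY.aemeasurable]
  · congr with ω
    exact integral_map hX.aemeasurable
      (hF.comp_measurable measurable_prodMk_right).aestronglyMeasurable
  · exact hF.integral_prod_left'.aestronglyMeasurable

theorem ProbabilityTheory.IndepFun.integral_ite_le_mul {C : Ω → ℝ} {Y : Ω → β}
    (hCY : IndepFun C Y μ) (hC : Measurable C) (hY : Measurable Y) {s f : β → ℝ}
    (hs : Measurable s) (hf : Measurable f) (hfi : Integrable (fun ω ↦ f (Y ω)) μ) :
    ∫ ω, (if s (Y ω) ≤ C ω then 1 else 0) * f (Y ω) ∂μ =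
      ∫ ω, μ.real {ω' | s (Y ω) ≤ C ω'} * f (Y ω) ∂μ := by
  have hF : Measurable fun q : ℝ × β ↦ (if s q.2 ≤ q.1 then (1 : ℝ) else 0) * f q.2 :=
    (Measurable.ite (measurableSet_le (hs.comp measurable_snd) measurable_fst)
      measurable_const measurable_const).mul (hf.comp measurable_snd)
  rw [hCY.integral_comp_prodMk hC hY
    (F := fun q ↦ (if s q.2 ≤ q.1 then (1 : ℝ) else 0) * f q.2) hF.stronglyMeasurable]
  · congr with ω
    dsimp only
    rw [integral_mul_const, ← integral_indicator_one (measurableSet_le measurable_const hC)]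
    simp only [Set.indicator_apply, Set.mem_ofPred_eq, Pi.one_apply]
  · refine hfi.mono (hF.comp (hC.prodMk hY)).aestronglyMeasurable
      (ae_of_all _ fun ω ↦ ?_)
    split_ifs <;> simp

theorem antitone_measureReal_setOf_le (C : Ω → ℝ) :
    Antitone fun u ↦ μ.real {ω | u ≤ C ω} :=
  fun _ _ huv ↦ measureReal_mono fun _ hω ↦ huv.trans hω

end

section ipcwIntegrand
variable {κ : Type*} (G : ℝ → ℝ) (h : ℝ → κ → ℝ) (t : ℝ)

noncomputable def ipcwIntegrand (p : ℝ × κ) : ℝ :=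
  h p.1 p.2 * (if p.1 ≤ t then 1 else 0) / G p.1

theorem measurable_ipcwIntegrand [MeasurableSpace κ] (hG : Measurable G)
    (hh : Measurable fun q : ℝ × κ ↦ h q.1 q.2) : Measurable (ipcwIntegrand G h t) :=
  (hh.mul (Measurable.ite (measurableSet_le measurable_fst measurable_const)
    measurable_const measurable_const)).div (hG.comp measurable_fst)

variable {G h t}

theorem norm_ipcwIntegrand_le (hG : Antitone G) (hGt : 0 < G t) {Cb : ℝ}
    (hh : ∀ x k, |h x k| ≤ Cb) (p : ℝ × κ) : ‖ipcwIntegrand G h t p‖ ≤ Cb / G t := by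
  obtain ⟨x, k⟩ := p
  by_cases hx : x ≤ t
  · simp only [ipcwIntegrand, hx, if_true, mul_one, norm_div, Real.norm_eq_abs,
      abs_of_pos (hGt.trans_le (hG hx))]
    exact div_le_div₀ ((abs_nonneg _).trans (hh x k)) (hh x k) hGt (hG hx)
  · simp only [ipcwIntegrand, hx, if_false, mul_zero, zero_div, norm_zero]
    exact div_nonneg ((abs_nonneg _).trans (hh x k)) hGt.le

theorem ipcw_weight_mul_eq_mul_ipcwIntegrand (x c : ℝ) (k : κ) :
    (if min x t ≤ c then 1 else 0) * G t / G (min (min x c) t) * h x k *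
        (if x ≤ t then 1 else 0) =
      G t * ((if x ≤ c then 1 else 0) * ipcwIntegrand G h t (x, k)) := by
  by_cases hxt : x ≤ t
  · by_cases hxc : x ≤ c
    · simp only [ipcwIntegrand, hxt, hxc, min_eq_left, if_true]
      ring
    · simp [hxt, hxc]
  · simp [ipcwIntegrand, hxt]

theorem mul_ipcwIntegrand {x : ℝ} (hx : x ≤ t → G x ≠ 0) (k : κ) :
    G x * ipcwIntegrand G h t (x, k) = h x k * (if x ≤ t then 1 else 0) := by
  by_cases hxt : x ≤ t
  · have := hx hxt
    simp only [ipcwIntegrand, hxt, if_true]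
    field_simp
  · simp [ipcwIntegrand, hxt]

end ipcwIntegrand

theorem ipcw_weight_unbiased_general
    (Ω : Type*) [MeasurableSpace Ω] (μ : Measure Ω) [IsProbabilityMeasure μ]
    (T C : Ω → ℝ) (eps : Ω → ℕ)
    (hT : Measurable T) (hC : Measurable C) (heps : Measurable eps)
    (hTpos : ∀ ω, 0 < T ω)
    (hindep : IndepFun C (fun ω => (T ω, eps ω)) μ)
    (τ : ℝ)
    (G : ℝ → ℝ) (hG : ∀ u, G u = (μ {ω | u ≤ C ω}).toReal)
    (hGpos : ∀ u ∈ Set.Icc (0:ℝ) τ, 0 < G u)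
    (h : ℝ → ℕ → ℝ) (hhmeas : Measurable (fun q : ℝ × ℕ => h q.1 q.2))
    (Cb : ℝ) (hhbdd : ∀ x k, |h x k| ≤ Cb)
    (t : ℝ) (ht0 : 0 ≤ t) (htτ : t ≤ τ)
    (w : Ω → ℝ)
    (hw : ∀ ω, w ω = (if min (T ω) t ≤ C ω then (1:ℝ) else 0) *
      G t / G (min (min (T ω) (C ω)) t)) :
    ∫ ω, w ω * h (T ω) (eps ω) * (if T ω ≤ t then (1:ℝ) else 0) ∂μ =
      G t * ∫ ω, h (T ω) (eps ω) * (if T ω ≤ t then (1:ℝ) else 0) ∂μ := by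
  have hGanti : Antitone G := funext hG ▸ antitone_measureReal_setOf_le C
  have hGt : 0 < G t := hGpos t ⟨ht0, htτ⟩
  have hXm : Measurable fun ω ↦ (T ω, eps ω) := hT.prodMk heps
  have hφm : Measurable (ipcwIntegrand G h t) :=
    measurable_ipcwIntegrand G h t hGanti.measurable hhmeas
  have hφi : Integrable (fun ω ↦ ipcwIntegrand G h t (T ω, eps ω)) μ :=
    .of_bound (hφm.comp hXm).aestronglyMeasurable _
      (ae_of_all _ fun _ ↦ norm_ipcwIntegrand_le hGanti hGt hhbdd _)
  have hGT : ∀ ω, T ω ≤ t → G (T ω) ≠ 0 := fun ω hTt ↦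
    (hGpos (T ω) ⟨(hTpos ω).le, hTt.trans htτ⟩).ne'
  calc ∫ ω, w ω * h (T ω) (eps ω) * (if T ω ≤ t then 1 else 0) ∂μ
      = G t * ∫ ω, (if T ω ≤ C ω then 1 else 0) * ipcwIntegrand G h t (T ω, eps ω) ∂μ :=
        by simp only [hw, ipcw_weight_mul_eq_mul_ipcwIntegrand, integral_const_mul]
    _ = G t * ∫ ω, G (T ω) * ipcwIntegrand G h t (T ω, eps ω) ∂μ := by
        rw [hindep.integral_ite_le_mul hC hXm measurable_fst hφm hφi]
        simp only [hG, measureReal_def]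
    _ = G t * ∫ ω, h (T ω) (eps ω) * (if T ω ≤ t then 1 else 0) ∂μ := by
        congr 1
        exact integral_congr_ae (ae_of_all _ fun ω ↦ mul_ipcwIntegrand (hGT ω) (eps ω))

/-- The IPCW weight `ω(t) = 1{C ≥ T∧t}·G(t)/G(Z∧t)` satisfies
`E[ω(t) h(T,ε) 1{T ≤ t}] = G(t)·E[h(T,ε) 1{T ≤ t}]` for bounded measurable `h`,
when `C ⫫ (T, ε)` and `G(u) = P(C ≥ u) > 0` on `[0,τ]`. -/
theorem ipcw_weight_unbiased
    (Ω : Type*) [MeasurableSpace Ω] (μ : Measure Ω) [IsProbabilityMeasure μ]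
    (T C : Ω → ℝ) (eps : Ω → ℕ)
    (hT : Measurable T) (hC : Measurable C) (heps : Measurable eps)
    (hTpos : ∀ ω, 0 < T ω)
    (hindep : IndepFun C (fun ω => (T ω, eps ω)) μ)
    (τ : ℝ) (hτ : 0 < τ)
    (G : ℝ → ℝ) (hG : ∀ u, G u = (μ {ω | u ≤ C ω}).toReal)
    (hGpos : ∀ u ∈ Set.Icc (0:ℝ) τ, 0 < G u)
    (h : ℝ → ℕ → ℝ) (hhmeas : Measurable (fun q : ℝ × ℕ => h q.1 q.2))
    (Cb : ℝ) (hhbdd : ∀ x k, |h x k| ≤ Cb)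
    (t : ℝ) (ht0 : 0 ≤ t) (htτ : t ≤ τ)
    (w : Ω → ℝ)
    (hw : ∀ ω, w ω = (if min (T ω) t ≤ C ω then (1:ℝ) else 0) *
      G t / G (min (min (T ω) (C ω)) t)) :
    ∫ ω, w ω * h (T ω) (eps ω) * (if T ω ≤ t then (1:ℝ) else 0) ∂μ =
      G t * ∫ ω, h (T ω) (eps ω) * (if T ω ≤ t then (1:ℝ) else 0) ∂μ :=
  ipcw_weight_unbiased_general Ω μ T C eps hT hC heps hTpos hindep τ G hG hGpos h hhmeas Cb hhbdd t
    ht0 htτ w hw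
end
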